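/- Let $\gamma_1,\gamma_2,\rho,\alpha,\beta,\lambda \geq 0$ with $\beta - \alpha > 0$, $\gamma_2\rho - \gamma_1\alpha > 0$, and suppose $\gamma_1\alpha - \gamma_2\rho + \gamma_2(\beta-\alpha) \neq 0$ and $\alpha \neq 0$. Then the discriminant of the quadratic function $f(\Lambda) = -\frac{\alpha^2(\gamma_1\alpha - \gamma_2\rho + \gamma_2(\beta-\alpha))^2}{2\gamma_2^2(\gamma_2\rho - \gamma_1\alpha)}\Lambda^2 + \left(2(\beta-\alpha) + \frac{\gamma_1\alpha}{\gamma_2} + \frac{\gamma_1\alpha(\beta-\alpha)}{\gamma_2\rho - \gamma_1\alpha}\right)\Lambda - \frac{\gamma_1^2}{2(\gamma_2\rho - \gamma_1\alpha)}$ is strictly positive; consequently there exists $\Lambda > 0$ with $f(\Lambda) > 0$. -/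

import Mathlib

/-!
Write `D = γ₂ρ - γ₁α > 0`, `u = γ₁α/γ₂ ≥ 0` and `v = γ₁α(β-α)/D ≥ 0`. The linear coefficient is
`b = 2(β-α) + u + v`, and the product of the two outer coefficients satisfies `4ac = (v - u)²`,
so the discriminant factors as `b² - (v - u)² = 4(β-α+u)(β-α+v) > 0`. Since `a ≤ 0 < b`, the
quadratic then takes a positive value at its vertex (or, if `a = 0`, far out on the right).
-/

lemma discrim_pos_of_four_mul_eq_sq_sub {a c s u v : ℝ} (hs : 0 < s) (hu : 0 ≤ u) (hv : 0 ≤ v)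
    (h : 4 * a * c = (v - u) ^ 2) : 0 < discrim a (2 * s + u + v) c := by
  have hfactor : discrim a (2 * s + u + v) c = 4 * (s + u) * (s + v) := by
    rw [discrim, h]
    ring
  rw [hfactor]
  exact mul_pos (mul_pos four_pos (add_pos_of_pos_of_nonneg hs hu))
    (add_pos_of_pos_of_nonneg hs hv)

lemma exists_pos_quadratic_pos_of_nonpos {a b c : ℝ} (ha : a ≤ 0) (hb : 0 < b)
    (hd : 0 < discrim a b c) : ∃ x : ℝ, 0 < x ∧ 0 < a * x ^ 2 + b * x + c := by
  rcases ha.lt_or_eq with ha | rfl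
  · refine ⟨-b / (2 * a), div_pos_of_neg_of_neg (by linarith) (by linarith), ?_⟩
    have hvertex : a * (-b / (2 * a)) ^ 2 + b * (-b / (2 * a)) + c = discrim a b c / (-4 * a) := by
      have ha0 : a ≠ 0 := ha.ne
      rw [discrim]
      field_simp
      ring
    rw [hvertex]
    exact div_pos hd (by linarith)
  · refine ⟨(|c| + 1) / b, by positivity, ?_⟩
    have hlin : b * ((|c| + 1) / b) = |c| + 1 := mul_div_cancel₀ _ hb.ne'
    nlinarith [neg_abs_le c]

lemma four_mul_outer_coeffs_eq_sq {γ₁ γ₂ ρ α β : ℝ} (hγ₂ : γ₂ ≠ 0) (hD : γ₂ * ρ - γ₁ * α ≠ 0) :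
    4 * (-(α ^ 2 * (γ₁ * α - γ₂ * ρ + γ₂ * (β - α)) ^ 2) / (2 * γ₂ ^ 2 * (γ₂ * ρ - γ₁ * α))) *
        (-(γ₁ ^ 2) / (2 * (γ₂ * ρ - γ₁ * α))) =
      (γ₁ * α * (β - α) / (γ₂ * ρ - γ₁ * α) - γ₁ * α / γ₂) ^ 2 := by
  have hD' : γ₂ * ρ - α * γ₁ ≠ 0 := by rwa [mul_comm α]
  field_simp
  ring

theorem stmt0_general (γ₁ γ₂ ρ α β : ℝ)
    (hγ₁ : 0 ≤ γ₁) (hγ₂ : 0 ≤ γ₂) (hα : 0 ≤ α)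
    (hβα : 0 < β - α) (hden : 0 < γ₂ * ρ - γ₁ * α) :
    (let a : ℝ := -(α ^ 2 * (γ₁ * α - γ₂ * ρ + γ₂ * (β - α)) ^ 2) /
        (2 * γ₂ ^ 2 * (γ₂ * ρ - γ₁ * α));
     let b : ℝ := 2 * (β - α) + γ₁ * α / γ₂ + γ₁ * α * (β - α) / (γ₂ * ρ - γ₁ * α);
     let c : ℝ := -(γ₁ ^ 2) / (2 * (γ₂ * ρ - γ₁ * α));
     0 < b ^ 2 - 4 * a * c ∧ ∃ Λ : ℝ, 0 < Λ ∧ 0 < a * Λ ^ 2 + b * Λ + c) := by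
  intro a b c
  have hγ₂ne : γ₂ ≠ 0 := by
    rintro rfl
    nlinarith [mul_nonneg hγ₁ hα]
  have hu : 0 ≤ γ₁ * α / γ₂ := by positivity
  have hv : 0 ≤ γ₁ * α * (β - α) / (γ₂ * ρ - γ₁ * α) :=
    div_nonneg (mul_nonneg (mul_nonneg hγ₁ hα) hβα.le) hden.le
  have hdisc : 0 < discrim a b c := discrim_pos_of_four_mul_eq_sq_sub hβα hu hv
    (four_mul_outer_coeffs_eq_sq hγ₂ne hden.ne')
  have ha : a ≤ 0 := by
    simp only [a, neg_div, neg_nonpos]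
    positivity
  have hb : 0 < b := by simp only [b]; linarith
  exact ⟨hdisc, exists_pos_quadratic_pos_of_nonpos ha hb hdisc⟩

/-- positivity of the discriminant of the quadratic `f` in the
risk-neutral case, and existence of `Λ > 0` with `f Λ > 0`. -/
theorem stmt0 (γ₁ γ₂ ρ α β lam : ℝ)
    (hγ₁ : 0 ≤ γ₁) (hγ₂ : 0 ≤ γ₂) (hρ : 0 ≤ ρ) (hα : 0 ≤ α) (hβ : 0 ≤ β) (hlam : 0 ≤ lam)
    (hβα : 0 < β - α) (hden : 0 < γ₂ * ρ - γ₁ * α)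
    (hne : γ₁ * α - γ₂ * ρ + γ₂ * (β - α) ≠ 0) (hαne : α ≠ 0) :
    (let a : ℝ := -(α ^ 2 * (γ₁ * α - γ₂ * ρ + γ₂ * (β - α)) ^ 2) /
        (2 * γ₂ ^ 2 * (γ₂ * ρ - γ₁ * α));
     let b : ℝ := 2 * (β - α) + γ₁ * α / γ₂ + γ₁ * α * (β - α) / (γ₂ * ρ - γ₁ * α);
     let c : ℝ := -(γ₁ ^ 2) / (2 * (γ₂ * ρ - γ₁ * α));
     0 < b ^ 2 - 4 * a * c ∧ ∃ Λ : ℝ, 0 < Λ ∧ 0 < a * Λ ^ 2 + b * Λ + c) :=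
  stmt0_general γ₁ γ₂ ρ α β hγ₁ hγ₂ hα hβα hden
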